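/- arXiv:2003.06369 — 3 statements merged into one kernel-verified Lean document; each statement's English description precedes it below -/
import Mathlib

section
/- Let f be L-smooth and μ-gradient dominated on H and x ∈ H, g ∈ H with g ≠ 0 and ∇f(x) ≠ 0. Set η = ⟨−∇f(x), g⟩/(‖∇f(x)‖‖g‖) and γ = η‖∇f(x)‖/(L‖g‖), and assume γ ≤ 1. Then for any set C with x, x + γ g ∈ C and any m ≤ inf_C f with f minorized appropriately, f(x + γ g) − min_C f ≤ (1 − η² μ/L)(f(x) − min_C f). -/
/-! Smoothness bounds `f (x + t • g)` by a quadratic in `t`, and the step `γ` is exactly the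
minimiser of that quadratic, so one step decreases `f` by `η² ‖∇f x‖² / (2L)`. Gradient
domination, together with `inf f ≤ minC`, bounds this decrease from below by `η² μ / L` times
the gap `f x - minC`. -/

open scoped RealInnerProductSpace

theorem two_mul_sub_le_sq_norm_of_gradient_dominated {E F : Type*} [Norm F]
    {f : E → ℝ} {f' : E → F} {μ infH m : ℝ} (hμ : 0 < μ)
    (hdom : ∀ z : E, f z - infH ≤ ‖f' z‖ ^ 2 / (2 * μ)) (hinf : infH ≤ m) (x : E) :
    2 * μ * (f x - m) ≤ ‖f' x‖ ^ 2 := by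
  calc 2 * μ * (f x - m) ≤ 2 * μ * (f x - infH) := by gcongr
    _ ≤ ‖f' x‖ ^ 2 := by rw [mul_comm, ← le_div_iff₀ (by positivity)]; exact hdom x

section

variable {H : Type*} [NormedAddCommGroup H] [InnerProductSpace ℝ H]
  {f : H → ℝ} {f' : H → H} {L : ℝ}

theorem le_quadratic_of_smooth
    (hsmooth : ∀ a b : H, f b - f a - ⟪f' a, b - a⟫ ≤ (L / 2) * ‖b - a‖ ^ 2)
    (x g : H) (t : ℝ) :
    f (x + t • g) ≤ f x + t * ⟪f' x, g⟫ + L / 2 * t ^ 2 * ‖g‖ ^ 2 := by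
  have h := hsmooth x (x + t • g)
  rw [add_sub_cancel_left, inner_smul_right, norm_smul, mul_pow, Real.norm_eq_abs, sq_abs] at h
  linarith

theorem le_sub_of_smooth_of_exact_step (hL : 0 < L)
    (hsmooth : ∀ a b : H, f b - f a - ⟪f' a, b - a⟫ ≤ (L / 2) * ‖b - a‖ ^ 2)
    (x : H) {g : H} (hg : g ≠ 0) :
    f (x + (-⟪f' x, g⟫ / (L * ‖g‖ ^ 2)) • g) ≤ f x - ⟪f' x, g⟫ ^ 2 / (2 * L * ‖g‖ ^ 2) := by
  have hg' : ‖g‖ ≠ 0 := norm_ne_zero_iff.mpr hg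
  refine (le_quadratic_of_smooth hsmooth x g _).trans_eq ?_
  field_simp
  ring

end

theorem short_step_contraction_general
    {H : Type*} [NormedAddCommGroup H] [InnerProductSpace ℝ H]
    (f : H → ℝ) (f' : H → H) (L μ : ℝ) (hL : 0 < L) (hμ : 0 < μ)
    (hsmooth : ∀ a b : H, f b - f a - inner ℝ (f' a) (b - a) ≤ (L / 2) * ‖b - a‖ ^ 2)
    (infH : ℝ)
    (hdom : ∀ z : H, f z - infH ≤ ‖f' z‖ ^ 2 / (2 * μ))
    (minC : ℝ)
    (hinf : infH ≤ minC)
    (x g : H) (hg : g ≠ 0) (hgrad : f' x ≠ 0)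
    (η γ : ℝ)
    (hη : η = (inner ℝ (-(f' x)) g : ℝ) / (‖f' x‖ * ‖g‖))
    (hγ : γ = η * ‖f' x‖ / (L * ‖g‖)) :
    f (x + γ • g) - minC ≤ (1 - η ^ 2 * μ / L) * (f x - minC) := by
  have hg' : ‖g‖ ≠ 0 := norm_ne_zero_iff.mpr hg
  have hgrad' : ‖f' x‖ ≠ 0 := norm_ne_zero_iff.mpr hgrad
  have hγ_eq : γ = -⟪f' x, g⟫ / (L * ‖g‖ ^ 2) := by
    rw [hγ, hη, inner_neg_left]
    field_simp
  have hdecrease : η ^ 2 * ‖f' x‖ ^ 2 / (2 * L) = ⟪f' x, g⟫ ^ 2 / (2 * L * ‖g‖ ^ 2) := by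
    rw [hη, inner_neg_left]; field_simp
  have hstep := le_sub_of_smooth_of_exact_step hL hsmooth x hg
  rw [← hγ_eq, ← hdecrease] at hstep
  have hpl := two_mul_sub_le_sq_norm_of_gradient_dominated hμ hdom hinf x
  calc f (x + γ • g) - minC ≤ f x - minC - η ^ 2 * ‖f' x‖ ^ 2 / (2 * L) := by linarith
    _ ≤ f x - minC - η ^ 2 * (2 * μ * (f x - minC)) / (2 * L) := by gcongr
    _ = (1 - η ^ 2 * μ / L) * (f x - minC) := by field_simp

/-- Short-step contraction: for an L-smooth, μ-gradient dominated function, a step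
of size γ = η‖∇f(x)‖/(L‖g‖) ≤ 1 along g contracts the primal gap by (1 - η²μ/L). -/
theorem short_step_contraction
    {H : Type*} [NormedAddCommGroup H] [InnerProductSpace ℝ H]
    (f : H → ℝ) (f' : H → H) (L μ : ℝ) (hL : 0 < L) (hμ : 0 < μ)
    (hsmooth : ∀ a b : H, f b - f a - inner ℝ (f' a) (b - a) ≤ (L / 2) * ‖b - a‖ ^ 2)
    (infH : ℝ)
    (hdom : ∀ z : H, f z - infH ≤ ‖f' z‖ ^ 2 / (2 * μ))
    (C : Set H) (minC : ℝ)
    (hminC : ∀ z ∈ C, minC ≤ f z) (hinf : infH ≤ minC)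
    (x g : H) (hg : g ≠ 0) (hgrad : f' x ≠ 0)
    (η γ : ℝ)
    (hη : η = (inner ℝ (-(f' x)) g : ℝ) / (‖f' x‖ * ‖g‖))
    (hγ : γ = η * ‖f' x‖ / (L * ‖g‖)) (hγ1 : γ ≤ 1)
    (hx : x ∈ C) (hxγ : x + γ • g ∈ C) :
    f (x + γ • g) - minC ≤ (1 - η ^ 2 * μ / L) * (f x - minC) :=
  short_step_contraction_general f f' L μ hL hμ hsmooth infH hdom minC hinf x g hg hgrad η γ hη hγ
end

section
/- Let f be L-smooth and convex on H, let C be a compact convex set of diameter D, let y ∈ C, and let x₀ ∈ C minimize v ↦ ⟨∇f(y), v⟩ over C. Then f(x₀) − min_C f ≤ LD²/2. -/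
/-!
Expand `f x₀ - f x*` around `y`: smoothness bounds the remainder at `x₀` by `(L/2)‖x₀ - y‖² ≤ LD²/2`,
convexity makes the remainder at `x*` nonnegative, and the linear parts compare by the choice of `x₀`.
-/

theorem initialization_gap_bound_general
    {H : Type*} [NormedAddCommGroup H] [InnerProductSpace ℝ H]
    (f : H → ℝ) (f' : H → H) (L D : ℝ) (hL : 0 < L)
    (hsmooth : ∀ a b : H, f b - f a - inner ℝ (f' a) (b - a) ≤ (L / 2) * ‖b - a‖ ^ 2)
    (hconv : ∀ a b : H, f b - f a - inner ℝ (f' a) (b - a) ≥ 0)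
    (C : Set H)
    (hD : ∀ a ∈ C, ∀ b ∈ C, ‖a - b‖ ≤ D)
    (y : H) (hy : y ∈ C)
    (x₀ : H) (hx₀ : x₀ ∈ C)
    (hmin₀ : ∀ v ∈ C, (inner ℝ (f' y) x₀ : ℝ) ≤ inner ℝ (f' y) v)
    (xstar : H) (hxstar : xstar ∈ C) :
    f x₀ - f xstar ≤ L * D ^ 2 / 2 := by
  have hsq : ‖x₀ - y‖ ^ 2 ≤ D ^ 2 :=
    pow_le_pow_left₀ (norm_nonneg _) (hD x₀ hx₀ y hy) 2
  calc f x₀ - f xstar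
      = (f x₀ - f y - inner ℝ (f' y) (x₀ - y)) - (f xstar - f y - inner ℝ (f' y) (xstar - y))
          + (inner ℝ (f' y) x₀ - inner ℝ (f' y) xstar) := by
        rw [inner_sub_right, inner_sub_right]; ring
    _ ≤ (L / 2) * ‖x₀ - y‖ ^ 2 - 0 + 0 := by
        gcongr
        · exact hsmooth y x₀
        · exact hconv y xstar
        · exact sub_nonpos.mpr (hmin₀ xstar hxstar)
    _ ≤ L * D ^ 2 / 2 := by linarith [mul_le_mul_of_nonneg_left hsq hL.le]

/-- Initialization bound: if x₀ minimizes ⟨∇f(y),·⟩ over C, then the primal gap at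
x₀ is at most LD²/2. -/
theorem initialization_gap_bound
    {H : Type*} [NormedAddCommGroup H] [InnerProductSpace ℝ H]
    (f : H → ℝ) (f' : H → H) (L D : ℝ) (hL : 0 < L)
    (hsmooth : ∀ a b : H, f b - f a - inner ℝ (f' a) (b - a) ≤ (L / 2) * ‖b - a‖ ^ 2)
    (hconv : ∀ a b : H, f b - f a - inner ℝ (f' a) (b - a) ≥ 0)
    (C : Set H) (hCcompact : IsCompact C) (hCconv : Convex ℝ C)
    (hD : ∀ a ∈ C, ∀ b ∈ C, ‖a - b‖ ≤ D)
    (y : H) (hy : y ∈ C)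
    (x₀ : H) (hx₀ : x₀ ∈ C)
    (hmin₀ : ∀ v ∈ C, (inner ℝ (f' y) x₀ : ℝ) ≤ inner ℝ (f' y) v)
    (xstar : H) (hxstar : xstar ∈ C) (hmin : ∀ z ∈ C, f xstar ≤ f z) :
    f x₀ - f xstar ≤ L * D ^ 2 / 2 :=
  initialization_gap_bound_general f f' L D hL hsmooth hconv C hD y hy x₀ hx₀ hmin₀ xstar hxstar
end

section
/- Let f be L-smooth and convex on H, C compact convex with diameter D, x ∈ C, x* ∈ argmin_C f, v ∈ argmin_{z∈C}⟨∇f(x), z⟩, and define the short step γ = min{⟨∇f(x), x − v⟩/(L‖x − v‖²), 1} (assume v ≠ x). Setting x⁺ = x + γ(v − x), then: if γ < 1 then f(x⁺) − f(x*) ≤ (f(x) − f(x*))(1 − (f(x) − f(x*))/(2LD²)); and if γ = 1 then f(x⁺) − f(x*) ≤ (f(x) − f(x*))/2. -/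
/-!
With `g = ⟪∇f(x), x - v⟫` the Frank–Wolfe gap and `N = L‖x - v‖²`, smoothness bounds `f` along the
segment by the parabola `f x - γ g + γ² N / 2`, while convexity and the choice of `v` give
`f x - f x* ≤ g`. If `γ < 1` then `γ = g / N` is the vertex of the parabola, so the decrease is
`g² / (2N) ≥ (f x - f x*)² / (2LD²)`. If `γ = 1` then `N ≤ g`, so the decrease is at least `g / 2`.
-/

open scoped RealInnerProductSpace

section FrankWolfe

variable {H : Type*} [NormedAddCommGroup H] [InnerProductSpace ℝ H] {f : H → ℝ} {f' : H → H}

theorem sub_le_inner_of_firstOrder_convex (hconv : ∀ a b : H, f b - f a - ⟪f' a, b - a⟫ ≥ 0)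
    {x xstar v : H} (hv : ⟪f' x, v⟫ ≤ ⟪f' x, xstar⟫) :
    f x - f xstar ≤ ⟪f' x, x - v⟫ := by
  have h := hconv x xstar
  rw [inner_sub_right] at h ⊢
  linarith

theorem le_along_segment_of_smooth {L : ℝ}
    (hsmooth : ∀ a b : H, f b - f a - ⟪f' a, b - a⟫ ≤ (L / 2) * ‖b - a‖ ^ 2)
    (x v : H) (γ : ℝ) :
    f (x + γ • (v - x)) ≤ f x - γ * ⟪f' x, x - v⟫ + γ ^ 2 * (L * ‖x - v‖ ^ 2) / 2 := by
  have h := hsmooth x (x + γ • (v - x))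
  rw [add_sub_cancel_left, real_inner_smul_right, norm_smul, mul_pow, Real.norm_eq_abs, sq_abs,
    norm_sub_rev, inner_sub_right] at h
  rw [inner_sub_right]
  linarith

end FrankWolfe

theorem sub_vertex_le_mul_one_sub {h g N M : ℝ} (hh : 0 ≤ h) (hhg : h ≤ g) (hN : 0 < N)
    (hNM : 2 * N ≤ M) :
    h - g / N * g + (g / N) ^ 2 * N / 2 ≤ h * (1 - h / M) := by
  have hvertex : h - g / N * g + (g / N) ^ 2 * N / 2 = h - g ^ 2 / (2 * N) := by
    field_simp
    ring
  have hcompare : h ^ 2 / M ≤ g ^ 2 / (2 * N) :=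
    div_le_div₀ (sq_nonneg g) (pow_le_pow_left₀ hh hhg 2) (by positivity) hNM
  rw [hvertex, mul_one_sub, mul_div_assoc', ← sq]
  linarith

theorem fw_short_step_progress_general
    {H : Type*} [NormedAddCommGroup H] [InnerProductSpace ℝ H]
    (f : H → ℝ) (f' : H → H) (L D : ℝ) (hL : 0 < L)
    (hsmooth : ∀ a b : H, f b - f a - inner ℝ (f' a) (b - a) ≤ (L / 2) * ‖b - a‖ ^ 2)
    (hconv : ∀ a b : H, f b - f a - inner ℝ (f' a) (b - a) ≥ 0)
    (C : Set H)
    (hD : ∀ a ∈ C, ∀ b ∈ C, ‖a - b‖ ≤ D)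
    (x : H) (hx : x ∈ C)
    (xstar : H) (hxstar : xstar ∈ C) (hmin : ∀ z ∈ C, f xstar ≤ f z)
    (v : H) (hv : v ∈ C) (hvmin : ∀ z ∈ C, (inner ℝ (f' x) v : ℝ) ≤ inner ℝ (f' x) z)
    (hvx : v ≠ x)
    (γ : ℝ)
    (hγ : γ = min ((inner ℝ (f' x) (x - v) : ℝ) / (L * ‖x - v‖ ^ 2)) 1) :
    (γ < 1 →
      f (x + γ • (v - x)) - f xstar ≤
        (f x - f xstar) * (1 - (f x - f xstar) / (2 * L * D ^ 2))) ∧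
    (γ = 1 → f (x + γ • (v - x)) - f xstar ≤ (f x - f xstar) / 2) := by
  have hdescent := le_along_segment_of_smooth hsmooth x v γ
  set g := ⟪f' x, x - v⟫
  set N := L * ‖x - v‖ ^ 2
  have hgap : f x - f xstar ≤ g := sub_le_inner_of_firstOrder_convex hconv (hvmin xstar hxstar)
  have hN : 0 < N := mul_pos hL (pow_pos (norm_pos_iff.mpr (sub_ne_zero.mpr hvx.symm)) 2)
  refine ⟨fun hlt => ?_, fun heq => ?_⟩
  · have hγg : γ = g / N := by
      rw [hγ, min_eq_left ((min_lt_iff.mp (hγ ▸ hlt)).resolve_right (lt_irrefl 1)).le]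
    have hND : 2 * N ≤ 2 * L * D ^ 2 := by
      have hsq := pow_le_pow_left₀ (norm_nonneg _) (hD x hx v hv) 2
      nlinarith
    have hprogress := sub_vertex_le_mul_one_sub (sub_nonneg.mpr (hmin x hx)) hgap hN hND
    rw [hγg] at hdescent ⊢
    linarith
  · have hNg : N ≤ g := (one_le_div hN).mp (heq ▸ hγ ▸ min_le_left _ _)
    rw [heq] at hdescent ⊢
    linarith

/-- Progress of a Frank-Wolfe short step. -/
theorem fw_short_step_progress
    {H : Type*} [NormedAddCommGroup H] [InnerProductSpace ℝ H]
    (f : H → ℝ) (f' : H → H) (L D : ℝ) (hL : 0 < L)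
    (hsmooth : ∀ a b : H, f b - f a - inner ℝ (f' a) (b - a) ≤ (L / 2) * ‖b - a‖ ^ 2)
    (hconv : ∀ a b : H, f b - f a - inner ℝ (f' a) (b - a) ≥ 0)
    (C : Set H) (hCcompact : IsCompact C) (hCconv : Convex ℝ C)
    (hD : ∀ a ∈ C, ∀ b ∈ C, ‖a - b‖ ≤ D)
    (x : H) (hx : x ∈ C)
    (xstar : H) (hxstar : xstar ∈ C) (hmin : ∀ z ∈ C, f xstar ≤ f z)
    (v : H) (hv : v ∈ C) (hvmin : ∀ z ∈ C, (inner ℝ (f' x) v : ℝ) ≤ inner ℝ (f' x) z)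
    (hvx : v ≠ x)
    (γ : ℝ)
    (hγ : γ = min ((inner ℝ (f' x) (x - v) : ℝ) / (L * ‖x - v‖ ^ 2)) 1) :
    (γ < 1 →
      f (x + γ • (v - x)) - f xstar ≤
        (f x - f xstar) * (1 - (f x - f xstar) / (2 * L * D ^ 2))) ∧
    (γ = 1 → f (x + γ • (v - x)) - f xstar ≤ (f x - f xstar) / 2) :=
  fw_short_step_progress_general f f' L D hL hsmooth hconv C hD x hx xstar hxstar hmin v hv hvmin
    hvx γ hγ
end
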